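/- Let G be a unimodular locally compact group with left Haar measure. For any u ∈ L²(G) and any compactly supported continuous function v on G, the function g ↦ ⟨λ(g)u, v⟩_{L²(G)} (where λ(g)u(x) = u(g⁻¹x) is the left regular representation) is square integrable on G, with ∫_G |⟨λ(g)u, v⟩|² dg ≤ ‖u‖²_{L²} · ‖v‖²_{L¹}. -/

import Mathlib

open MeasureTheory ComplexConjugate

/-!
After the substitution `x = g * y` the coefficient is `∫ u y * conj (v (g * y)) dy`. Cauchy–Schwarz
with weight `|v (g * ·)|` bounds its square by `‖v‖₁ * ∫ |u y|² |v (g * y)| dy`; integrating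
over `g` and using Tonelli and right invariance (`∫ |v (g * y)| dg = ‖v‖₁`) gives the bound.

The Haar measure need not be σ-finite, so Tonelli and the measurability of the coefficient are
justified on a σ-compact set of `g` outside which the coefficient vanishes: `u` lives on a
σ-finite set, which meets only countably many cosets of an open σ-compact subgroup containing
`tsupport v`. On a compact set of `g` the kernel `v (g * y)` agrees with a compactly supported
continuous function on `G × G`, which is measurable for the product σ-algebra.
-/

open Set Function Filter ENNReal
open scoped Pointwise

theorem Subgroup.coe_closure_subset_iUnion_pow {G : Type*} [Group G] (S : Set G) :
    (Subgroup.closure S : Set G) ⊆ ⋃ n : ℕ, (S ∪ S⁻¹) ^ n := by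
  intro x hx
  induction hx using Subgroup.closure_induction with
  | mem x hx => exact mem_iUnion.2 ⟨1, by simpa using Or.inl hx⟩
  | one => exact mem_iUnion.2 ⟨0, by simp⟩
  | mul x y _ _ hx hy =>
    obtain ⟨m, hm⟩ := mem_iUnion.1 hx
    obtain ⟨n, hn⟩ := mem_iUnion.1 hy
    exact mem_iUnion.2 ⟨m + n, pow_add (S ∪ S⁻¹) m n ▸ mul_mem_mul hm hn⟩
  | inv x _ hx =>
    obtain ⟨n, hn⟩ := mem_iUnion.1 hx
    refine mem_iUnion.2 ⟨n, ?_⟩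
    have hT : (S ∪ S⁻¹)⁻¹ = S ∪ S⁻¹ := by rw [union_inv, inv_inv, union_comm]
    rw [← Set.inv_mem_inv, ← inv_pow, hT] at hn
    exact hn

section TopologicalGroup

variable {G : Type*} [Group G] [TopologicalSpace G] [IsTopologicalGroup G]

theorem IsCompact.exists_isOpen_isSigmaCompact_subgroup_superset [LocallyCompactSpace G]
    {K : Set G} (hK : IsCompact K) :
    ∃ H : Subgroup G, IsOpen (H : Set G) ∧ IsSigmaCompact (H : Set G) ∧ K ⊆ H := by
  obtain ⟨U, hU, hU1⟩ := exists_compact_mem_nhds (1 : G)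
  set H := Subgroup.closure (U ∪ K)
  have hHo : IsOpen (H : Set G) :=
    H.isOpen_of_mem_nhds (mem_of_superset hU1 fun x hx => Subgroup.subset_closure (Or.inl hx))
  have hT : IsCompact ((U ∪ K) ∪ (U ∪ K)⁻¹) := (hU.union hK).union (hU.union hK).inv
  have hpow : ∀ n : ℕ, IsCompact (((U ∪ K) ∪ (U ∪ K)⁻¹) ^ n) := by
    intro n
    induction n with
    | zero => simp
    | succ n ih => rw [pow_succ]; exact ih.mul hT
  refine ⟨H, hHo, ?_, fun x hx => Subgroup.subset_closure (Or.inr hx)⟩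
  exact (isSigmaCompact_iUnion_of_isCompact _ hpow).of_isClosed_subset
    (H.isClosed_of_isOpen hHo) (Subgroup.coe_closure_subset_iUnion_pow _)

variable [MeasurableSpace G] [BorelSpace G]

theorem Subgroup.countable_setOf_measure_coset_pos (H : Subgroup G) (hH : IsOpen (H : Set G))
    (ν : Measure G) [SFinite ν] :
    {q : G ⧸ H | 0 < ν (QuotientGroup.mk ⁻¹' {q})}.Countable := by
  have : DiscreteTopology (G ⧸ H) := QuotientGroup.discreteTopology hH
  refine Measure.countable_meas_pos_of_disjoint_iUnion₀
    (fun q => ((isOpen_discrete {q}).preimage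
      continuous_quotient_mk').measurableSet.nullMeasurableSet)
    fun q q' hqq' => Disjoint.aedisjoint ?_
  exact (disjoint_singleton.2 hqq').preimage _

theorem IsCompact.exists_isOpen_isSigmaCompact_measure_preimage_mul_left_eq_zero
    [LocallyCompactSpace G] (ν : Measure G) [SFinite ν] {K : Set G} (hK : IsCompact K) :
    ∃ R : Set G, IsOpen R ∧ IsSigmaCompact R ∧ ∀ g ∉ R, ν ((g * ·) ⁻¹' K) = 0 := by
  obtain ⟨H, hHo, hHσ, hKH⟩ := hK.exists_isOpen_isSigmaCompact_subgroup_superset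
  set Q := {q : G ⧸ H | 0 < ν (QuotientGroup.mk ⁻¹' {q})}
  refine ⟨⋃ q ∈ Q, (· * q.out) ⁻¹' H, isOpen_biUnion fun q _ => hHo.preimage (by fun_prop),
    isSigmaCompact_biUnion (H.countable_setOf_measure_coset_pos hHo ν)
      fun q _ => (Homeomorph.mulRight q.out).isSigmaCompact_preimage.2 hHσ, fun g hg => ?_⟩
  by_contra hpos
  have hsub : (g * ·) ⁻¹' K ⊆ QuotientGroup.mk ⁻¹' {(QuotientGroup.mk g⁻¹ : G ⧸ H)} := fun y hy =>
    QuotientGroup.eq.2 (by simpa using H.inv_mem (hKH hy))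
  have hq : (QuotientGroup.mk g⁻¹ : G ⧸ H) ∈ Q :=
    (pos_iff_ne_zero.2 hpos).trans_le (measure_mono hsub)
  refine hg (mem_biUnion hq ?_)
  simpa using QuotientGroup.eq.1 (Quotient.out_eq (QuotientGroup.mk g⁻¹ : G ⧸ H)).symm

end TopologicalGroup

theorem IsSigmaCompact.sigmaFinite_restrict {X : Type*} [TopologicalSpace X] [MeasurableSpace X]
    (μ : Measure X) [IsFiniteMeasureOnCompacts μ] {R : Set X} (hR : IsSigmaCompact R)
    (hRm : MeasurableSet R) : SigmaFinite (μ.restrict R) := by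
  obtain ⟨C, hC, rfl⟩ := hR
  refine Measure.sigmaFinite_of_countable (S := insert (⋃ n, C n)ᶜ (range C))
    ((countable_range C).insert _) ?_ (by rw [sUnion_insert, sUnion_range, compl_union_self])
  rintro s (rfl | ⟨n, rfl⟩)
  · rw [Measure.restrict_apply hRm.compl, compl_inter_self, measure_empty]
    exact zero_lt_top
  · exact (Measure.restrict_apply_le _ _).trans_lt (hC n).measure_lt_top

theorem MeasureTheory.Measure.restrict_prod_compl_prod_univ_eq_zero {α β : Type*}
    [MeasurableSpace α] [MeasurableSpace β] (μ : Measure α) (ν : Measure β) [SFinite ν]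
    {s : Set α} (hs : MeasurableSet s) :
    (μ.restrict s).prod ν (sᶜ ×ˢ univ) = 0 := by
  simp [Measure.prod_prod, Measure.restrict_apply hs.compl]

section Kernel

variable {G E : Type*} [Group G] [TopologicalSpace G] [IsTopologicalGroup G] [LocallyCompactSpace G]
  [MeasurableSpace G] [BorelSpace G] [NormedAddCommGroup E] [NormedSpace ℝ E]
  {v : G → E}

theorem aestronglyMeasurable_comp_mul_prod_restrict_of_isCompact (μ ν : Measure G) [SFinite ν]
    (hv : Continuous v) (hvc : HasCompactSupport v) {C s : Set G} (hC : IsCompact C)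
    (hs : MeasurableSet s) (hsC : s ⊆ C) :
    AEStronglyMeasurable (fun p : G × G => v (p.1 * p.2)) ((μ.restrict s).prod ν) := by
  obtain ⟨χ, hχ1, -, hχc, -⟩ := exists_continuous_one_zero_of_isCompact hC isClosed_empty
    (disjoint_empty _)
  set k : G × G → E := fun p => χ p.1 • v (p.1 * p.2)
  have hkc : HasCompactSupport k := by
    refine HasCompactSupport.intro (hχc.prod (hχc.inv.mul hvc)) fun p hp => ?_
    by_contra hne
    have h1 : χ p.1 ≠ 0 := left_ne_zero_of_smul hne
    have h2 : v (p.1 * p.2) ≠ 0 := right_ne_zero_of_smul hne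
    refine hp ⟨subset_tsupport _ h1, ?_⟩
    simpa using mul_mem_mul (inv_mem_inv.2 (subset_tsupport _ h1)) (subset_tsupport _ h2)
  refine (hkc.stronglyMeasurable_of_prod (by fun_prop)).aestronglyMeasurable.congr ?_
  refine measure_mono_null (fun p hp => ?_) (Measure.restrict_prod_compl_prod_univ_eq_zero μ ν hs)
  refine ⟨fun hps => hp ?_, trivial⟩
  simp [k, hχ1 (hsC hps)]

theorem IsSigmaCompact.aestronglyMeasurable_comp_mul_prod_restrict (μ ν : Measure G) [SFinite ν]
    (hv : Continuous v) (hvc : HasCompactSupport v) {R : Set G} (hR : IsSigmaCompact R)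
    (hRm : MeasurableSet R) [SFinite (μ.restrict R)] :
    AEStronglyMeasurable (fun p : G × G => v (p.1 * p.2)) ((μ.restrict R).prod ν) := by
  obtain ⟨C, hC, hCR⟩ := hR
  have hcover : ((μ.restrict R).prod ν).restrict (⋃ n, (closure (C n) ∩ R) ×ˢ univ)
      = (μ.restrict R).prod ν := by
    refine Measure.restrict_eq_self_of_ae_mem (measure_mono_null (fun p hp => ?_)
      (Measure.restrict_prod_compl_prod_univ_eq_zero _ ν hRm))
    refine ⟨fun hpR => hp ?_, trivial⟩
    obtain ⟨n, hn⟩ := mem_iUnion.1 (hCR ▸ hpR)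
    exact mem_iUnion.2 ⟨n, ⟨subset_closure hn, hpR⟩, trivial⟩
  rw [← hcover, aestronglyMeasurable_iUnion_iff]
  intro n
  rw [← Measure.prod_restrict, Measure.restrict_univ,
    Measure.restrict_restrict_of_subset inter_subset_right]
  exact aestronglyMeasurable_comp_mul_prod_restrict_of_isCompact μ ν hv hvc (hC n).closure
    (isClosed_closure.measurableSet.inter hRm) inter_subset_left

end Kernel

theorem MeasureTheory.AEFinStronglyMeasurable.integral_mul_eq_setIntegral_sigmaFiniteSet
    {α 𝕜 : Type*} [MeasurableSpace α] [RCLike 𝕜] {μ : Measure α} {f : α → 𝕜}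
    (hf : AEFinStronglyMeasurable f μ) (h : α → 𝕜) :
    ∫ x, f x * h x ∂μ = ∫ x in hf.sigmaFiniteSet, f x * h x ∂μ := by
  refine (setIntegral_eq_integral_of_ae_compl_eq_zero ?_).symm
  filter_upwards [(ae_restrict_iff' hf.measurableSet.compl).1 hf.ae_eq_zero_compl] with x hx hxt
  simp [hx hxt]

theorem ENNReal.lintegral_mul_sq_le {α : Type*} [MeasurableSpace α] (ν : Measure α)
    {f w : α → ℝ≥0∞} (hf : AEMeasurable f ν) (hw : AEMeasurable w ν) :
    (∫⁻ x, f x * w x ∂ν) ^ 2 ≤ (∫⁻ x, f x ^ 2 * w x ∂ν) * ∫⁻ x, w x ∂ν := by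
  have hsplit : ∀ x, f x * w x = (f x ^ 2 * w x) ^ (2⁻¹ : ℝ) * w x ^ (2⁻¹ : ℝ) := fun x => by
    rw [ENNReal.mul_rpow_of_nonneg _ _ (by norm_num), mul_assoc,
      ← ENNReal.rpow_add_of_nonneg _ _ (by norm_num) (by norm_num), ← ENNReal.rpow_natCast,
      ← ENNReal.rpow_mul]
    norm_num
  have hholder : ∫⁻ x, f x * w x ∂ν
      ≤ (∫⁻ x, f x ^ 2 * w x ∂ν) ^ (2⁻¹ : ℝ) * (∫⁻ x, w x ∂ν) ^ (2⁻¹ : ℝ) := by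
    rw [lintegral_congr hsplit]
    exact lintegral_mul_norm_pow_le (f := fun x => f x ^ 2 * w x) ((hf.pow_const 2).mul hw) hw
      (by norm_num) (by norm_num) (by norm_num)
  calc (∫⁻ x, f x * w x ∂ν) ^ 2
      ≤ ((∫⁻ x, f x ^ 2 * w x ∂ν) ^ (2⁻¹ : ℝ) * (∫⁻ x, w x ∂ν) ^ (2⁻¹ : ℝ)) ^ 2 :=
        pow_le_pow_left' hholder 2
    _ = (∫⁻ x, f x ^ 2 * w x ∂ν) * ∫⁻ x, w x ∂ν := by
        rw [mul_pow, ← ENNReal.rpow_natCast, ← ENNReal.rpow_mul, ← ENNReal.rpow_natCast,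
          ← ENNReal.rpow_mul]
        norm_num

theorem eLpNorm_two_sq {α E : Type*} [MeasurableSpace α] [NormedAddCommGroup E] (μ : Measure α)
    (f : α → E) : eLpNorm f 2 μ ^ 2 = ∫⁻ x, ‖f x‖ₑ ^ 2 ∂μ := by
  have h := eLpNorm_nnreal_pow_eq_lintegral (μ := μ) (f := f) (p := 2) two_ne_zero
  push_cast at h
  simpa only [ENNReal.rpow_ofNat] using h

theorem memLp_two_and_integral_norm_sq_le {α E : Type*} [MeasurableSpace α] [NormedAddCommGroup E]
    {μ : Measure α} {F : α → E} (hF : AEStronglyMeasurable F μ) {B : ℝ≥0∞}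
    (hB : ∫⁻ x, ‖F x‖ₑ ^ 2 ∂μ ≤ B) (hBtop : B ≠ ⊤) :
    MemLp F 2 μ ∧ ∫ x, ‖F x‖ ^ 2 ∂μ ≤ B.toReal := by
  have henorm : ∀ x, ‖‖F x‖ ^ 2‖ₑ = ‖F x‖ₑ ^ 2 := fun x => by rw [enorm_pow, enorm_norm]
  have hint : Integrable (fun x => ‖F x‖ ^ 2) μ :=
    ⟨hF.norm.pow 2, by simpa [HasFiniteIntegral, henorm] using hB.trans_lt hBtop.lt_top⟩
  refine ⟨(memLp_two_iff_integrable_sq_norm hF).2 hint, ?_⟩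
  rw [integral_eq_lintegral_of_nonneg_ae (ae_of_all _ fun x => by positivity) hint.1]
  refine ENNReal.toReal_mono hBtop (le_of_eq_of_le (lintegral_congr fun x => ?_) hB)
  rw [ENNReal.ofReal_pow (norm_nonneg _), ofReal_norm]

section Correlation

variable {G 𝕜 : Type*} [Group G] [TopologicalSpace G] [IsTopologicalGroup G] [MeasurableSpace G]
  [BorelSpace G] [RCLike 𝕜] {μ ν : Measure G} {f v : G → 𝕜}

theorem enorm_integral_mul_conj_sq_le [μ.IsMulLeftInvariant] (hν : ν ≤ μ)
    (hf : AEStronglyMeasurable f ν) (hv : Measurable v) (g : G) :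
    ‖∫ y, f y * conj (v (g * y)) ∂ν‖ₑ ^ 2
      ≤ (∫⁻ y, ‖f y‖ₑ ^ 2 * ‖v (g * y)‖ₑ ∂ν) * ∫⁻ x, ‖v x‖ₑ ∂μ := by
  have hvg : Measurable fun y => ‖v (g * y)‖ₑ := (hv.comp (measurable_const_mul g)).enorm
  calc ‖∫ y, f y * conj (v (g * y)) ∂ν‖ₑ ^ 2
      ≤ (∫⁻ y, ‖f y‖ₑ * ‖v (g * y)‖ₑ ∂ν) ^ 2 := by
        gcongr
        simpa using enorm_integral_le_lintegral_enorm (fun y => f y * conj (v (g * y)))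
    _ ≤ (∫⁻ y, ‖f y‖ₑ ^ 2 * ‖v (g * y)‖ₑ ∂ν) * ∫⁻ y, ‖v (g * y)‖ₑ ∂ν :=
        ENNReal.lintegral_mul_sq_le ν hf.enorm hvg.aemeasurable
    _ ≤ (∫⁻ y, ‖f y‖ₑ ^ 2 * ‖v (g * y)‖ₑ ∂ν) * ∫⁻ x, ‖v x‖ₑ ∂μ :=
        mul_le_mul_right ((lintegral_mono' hν le_rfl).trans_eq
          (lintegral_mul_left_eq_self (fun x => ‖v x‖ₑ) g)) _

theorem setLIntegral_lintegral_mul_comp_mul_le [μ.IsMulRightInvariant] [SFinite ν] {R : Set G}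
    [SFinite (μ.restrict R)] {a w : G → ℝ≥0∞} (ha : AEMeasurable a ν) (hw : Measurable w)
    (haw : AEMeasurable (fun p : G × G => a p.2 * w (p.1 * p.2)) ((μ.restrict R).prod ν)) :
    ∫⁻ g in R, ∫⁻ y, a y * w (g * y) ∂ν ∂μ ≤ (∫⁻ y, a y ∂ν) * ∫⁻ x, w x ∂μ := by
  rw [lintegral_lintegral_swap haw, ← lintegral_mul_const'' _ ha]
  refine lintegral_mono fun y => ?_
  rw [lintegral_const_mul (a y) (f := fun g => w (g * y)) (hw.comp (measurable_mul_const y))]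
  exact mul_le_mul_right ((setLIntegral_le_lintegral _ _).trans_eq
    (lintegral_mul_right_eq_self w y)) _

theorem HasCompactSupport.aestronglyMeasurable_integral_mul_conj_and_lintegral_sq_le
    [LocallyCompactSpace G] [IsFiniteMeasureOnCompacts μ] [μ.IsMulLeftInvariant]
    [μ.IsMulRightInvariant] [SFinite ν] (hν : ν ≤ μ) (hf : AEStronglyMeasurable f ν)
    (hv : Continuous v) (hvc : HasCompactSupport v) :
    AEStronglyMeasurable (fun g => ∫ y, f y * conj (v (g * y)) ∂ν) μ ∧
      ∫⁻ g, ‖∫ y, f y * conj (v (g * y)) ∂ν‖ₑ ^ 2 ∂μ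
        ≤ (∫⁻ y, ‖f y‖ₑ ^ 2 ∂ν) * (∫⁻ x, ‖v x‖ₑ ∂μ) ^ 2 := by
  set Φ := fun g => ∫ y, f y * conj (v (g * y)) ∂ν
  obtain ⟨R, hRo, hRσ, hR⟩ :=
    hvc.isCompact.exists_isOpen_isSigmaCompact_measure_preimage_mul_left_eq_zero ν
  have hRm := hRo.measurableSet
  have := hRσ.sigmaFinite_restrict μ hRm
  have hk := hRσ.aestronglyMeasurable_comp_mul_prod_restrict μ ν hv hvc hRm
  have hΦR : support Φ ⊆ R := fun g hg => by
    by_contra hgR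
    refine hg (integral_eq_zero_of_ae ?_)
    filter_upwards [measure_eq_zero_iff_ae_notMem.1 (hR g hgR)] with y hy
    simp [image_eq_zero_of_notMem_tsupport hy]
  have hΦm : AEStronglyMeasurable Φ (μ.restrict R) :=
    (hf.comp_snd.mul (RCLike.continuous_conj.comp_aestronglyMeasurable hk)).integral_prod_right'
  have hNv : ∫⁻ x, ‖v x‖ₑ ∂μ ≠ ⊤ := (hv.integrable_of_hasCompactSupport hvc).2.ne
  refine ⟨indicator_eq_self.2 hΦR ▸ (aestronglyMeasurable_indicator_iff hRm).2 hΦm, ?_⟩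
  calc ∫⁻ g, ‖Φ g‖ₑ ^ 2 ∂μ = ∫⁻ g in R, ‖Φ g‖ₑ ^ 2 ∂μ :=
        (setLIntegral_eq_of_support_subset (fun g hg => hΦR (by simpa using hg))).symm
    _ ≤ ∫⁻ g in R, (∫⁻ y, ‖f y‖ₑ ^ 2 * ‖v (g * y)‖ₑ ∂ν) * ∫⁻ x, ‖v x‖ₑ ∂μ ∂μ :=
        lintegral_mono fun g => enorm_integral_mul_conj_sq_le hν hf hv.measurable g
    _ = (∫⁻ g in R, ∫⁻ y, ‖f y‖ₑ ^ 2 * ‖v (g * y)‖ₑ ∂ν ∂μ) * ∫⁻ x, ‖v x‖ₑ ∂μ :=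
        lintegral_mul_const' _ _ hNv
    _ ≤ (∫⁻ y, ‖f y‖ₑ ^ 2 ∂ν) * (∫⁻ x, ‖v x‖ₑ ∂μ) * ∫⁻ x, ‖v x‖ₑ ∂μ :=
        mul_le_mul_left (setLIntegral_lintegral_mul_comp_mul_le (hf.enorm.pow_const 2)
          hv.measurable.enorm ((hf.comp_snd.enorm.pow_const 2).mul hk.enorm)) _
    _ = (∫⁻ y, ‖f y‖ₑ ^ 2 ∂ν) * (∫⁻ x, ‖v x‖ₑ ∂μ) ^ 2 := by ring

end Correlation

theorem stmt0 {G : Type*} [Group G] [TopologicalSpace G] [IsTopologicalGroup G]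
    [LocallyCompactSpace G] [MeasurableSpace G] [BorelSpace G]
    (μ : Measure G) [μ.IsHaarMeasure] [μ.IsMulRightInvariant]
    (u v : G → ℂ) (hu : MemLp u 2 μ) (hv : Continuous v) (hvc : HasCompactSupport v) :
    MemLp (fun g : G => ∫ x, u (g⁻¹ * x) * conj (v x) ∂μ) 2 μ ∧
    ∫ g, ‖∫ x, u (g⁻¹ * x) * conj (v x) ∂μ‖ ^ 2 ∂μ ≤
      (eLpNorm u 2 μ).toReal ^ 2 * (eLpNorm v 1 μ).toReal ^ 2 := by
  have hfin := hu.aefinStronglyMeasurable two_ne_zero ofNat_ne_top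
  set t := hfin.sigmaFiniteSet
  have htranslate : ∀ g : G, ∫ x, u (g⁻¹ * x) * conj (v x) ∂μ
      = ∫ y, u y * conj (v (g * y)) ∂(μ.restrict t) := fun g => by
    rw [← integral_mul_left_eq_self _ g]
    simpa using hfin.integral_mul_eq_setIntegral_sigmaFiniteSet fun y => conj (v (g * y))
  simp_rw [htranslate]
  obtain ⟨hmeas, hbound⟩ :=
    hvc.aestronglyMeasurable_integral_mul_conj_and_lintegral_sq_le
      (Measure.restrict_le_self (s := t)) hu.1.restrict hv
  have hu_le : ∫⁻ y in t, ‖u y‖ₑ ^ 2 ∂μ ≤ eLpNorm u 2 μ ^ 2 :=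
    (setLIntegral_le_lintegral _ _).trans_eq (eLpNorm_two_sq μ u).symm
  have hB := hbound.trans (mul_le_mul_left hu_le _)
  rw [← eLpNorm_one_eq_lintegral_enorm] at hB
  have hBtop : eLpNorm u 2 μ ^ 2 * eLpNorm v 1 μ ^ 2 ≠ ⊤ :=
    mul_ne_top (pow_ne_top hu.2.ne) (pow_ne_top (hv.memLp_of_hasCompactSupport hvc).2.ne)
  simpa [ENNReal.toReal_mul, ENNReal.toReal_pow] using
    memLp_two_and_integral_norm_sq_le hmeas hB hBtop
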